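/- Let Y be a complex 3×3 matrix with SVD Y = U_L · diag(y₁, y₂, y₃) · U_R†, 0 ≤ y₁ ≤ y₂ ≤ y₃, y₃² > 2y₂². Let α index a longest row of Y and β a longest column of Y, and X = (2y₃² − y₂²)/(y₃² − 2y₂²). Writing the ratio R = (YY†)_{αα}(Y†Y)_{ββ}/|Y_{αβ}|², suppose y₃ > X y₂. Then |Y_{αβ}| ≥ |U_{L,α3}||U_{R,β3}| (y₃ − X y₂), i.e. the entry of Y common to its longest row and longest column is bounded below in terms of the third singular vectors' components. -/

import Mathlib

/-!
Write `a i = |U_{L,αi}|`, `b i = |U_{R,βi}|`. Row `α` of `Y` has squared length `∑ aᵢ² yᵢ²`, and the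
squared row lengths add up to `∑ yᵢ²`; since row `α` is longest it carries at least a third of this
total, which forces `a₀² + a₁² ≤ X a₂²`, and likewise `b₀² + b₁² ≤ X b₂²`. Expanding
`Y_{αβ} = ∑ U_{L,αi} yᵢ U*_{R,βi}`, the triangle inequality and `y₀ ≤ y₁` give
`|Y_{αβ}| ≥ a₂ b₂ y₂ - y₁ (a₀ b₀ + a₁ b₁)`, and Cauchy–Schwarz bounds `a₀ b₀ + a₁ b₁ ≤ X a₂ b₂`.
-/

open Matrix

section SingularValueDecomposition

variable {m n 𝕜 : Type*} [Fintype n] [RCLike 𝕜]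

lemma mul_conjTranspose_apply_self (A : Matrix m n 𝕜) (j : m) :
    (A * Aᴴ) j j = ((∑ k, ‖A j k‖ ^ 2 : ℝ) : 𝕜) := by
  simp only [mul_apply, conjTranspose_apply, ← starRingEnd_apply, RCLike.mul_conj]
  push_cast
  rfl

variable [DecidableEq n]

lemma sum_norm_sq_row_of_mem_unitaryGroup {U : Matrix n n 𝕜} (hU : U ∈ unitaryGroup n 𝕜)
    (j : n) : ∑ k, ‖U j k‖ ^ 2 = 1 := by
  have h := mul_conjTranspose_apply_self U j
  rw [← star_eq_conjTranspose, Unitary.mul_star_self_of_mem hU, one_apply_eq] at h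
  exact_mod_cast h.symm

lemma sum_norm_sq_column_of_mem_unitaryGroup {U : Matrix n n 𝕜} (hU : U ∈ unitaryGroup n 𝕜)
    (k : n) : ∑ j, ‖U j k‖ ^ 2 = 1 := by
  simpa using sum_norm_sq_row_of_mem_unitaryGroup (Unitary.star_mem hU) k

lemma conjTranspose_mul_diagonal_mul_conjTranspose (U V : Matrix n n 𝕜) (d : n → 𝕜) :
    (U * diagonal d * Vᴴ)ᴴ = V * diagonal (star d) * Uᴴ := by
  simp [conjTranspose_mul, Matrix.mul_assoc]

lemma mul_diagonal_mul_conjTranspose_apply (U V : Matrix n n 𝕜) (d : n → 𝕜) (j k : n) :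
    (U * diagonal d * Vᴴ) j k = ∑ i, U j i * d i * star (V k i) := by
  simp only [mul_apply (M := U * diagonal d), mul_diagonal, conjTranspose_apply]

lemma sum_norm_sq_row_mul_diagonal_mul_conjTranspose (U : Matrix n n 𝕜) {V : Matrix n n 𝕜}
    (hV : V ∈ unitaryGroup n 𝕜) (d : n → 𝕜) (j : n) :
    ∑ k, ‖(U * diagonal d * Vᴴ) j k‖ ^ 2 = ∑ i, ‖U j i‖ ^ 2 * ‖d i‖ ^ 2 := by
  have hVV : Vᴴ * V = 1 := by
    rw [← star_eq_conjTranspose]; exact Unitary.star_mul_self_of_mem hV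
  have hgram : U * diagonal d * Vᴴ * (U * diagonal d * Vᴴ)ᴴ
      = U * diagonal (fun i => ((‖d i‖ ^ 2 : ℝ) : 𝕜)) * Uᴴ := by
    rw [conjTranspose_mul_diagonal_mul_conjTranspose]
    calc U * diagonal d * Vᴴ * (V * diagonal (star d) * Uᴴ)
        = U * (diagonal d * (Vᴴ * V) * diagonal (star d)) * Uᴴ := by
          simp only [Matrix.mul_assoc]
      _ = _ := by
          rw [hVV, Matrix.mul_one, diagonal_mul_diagonal]
          simp [← starRingEnd_apply, RCLike.mul_conj]
  have h := mul_conjTranspose_apply_self (U * diagonal d * Vᴴ) j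
  rw [hgram, mul_diagonal_mul_conjTranspose_apply] at h
  have hterm : ∀ i, U j i * ((‖d i‖ ^ 2 : ℝ) : 𝕜) * star (U j i)
      = ((‖U j i‖ ^ 2 * ‖d i‖ ^ 2 : ℝ) : 𝕜) := by
    intro i
    rw [mul_right_comm, ← starRingEnd_apply, RCLike.mul_conj]
    push_cast; ring
  simp only [hterm] at h
  exact_mod_cast h.symm

lemma sum_sum_norm_sq_mul_diagonal_mul_conjTranspose {U V : Matrix n n 𝕜}
    (hU : U ∈ unitaryGroup n 𝕜) (hV : V ∈ unitaryGroup n 𝕜) (d : n → 𝕜) :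
    ∑ j, ∑ k, ‖(U * diagonal d * Vᴴ) j k‖ ^ 2 = ∑ i, ‖d i‖ ^ 2 := by
  simp_rw [sum_norm_sq_row_mul_diagonal_mul_conjTranspose U hV]
  rw [Finset.sum_comm]
  simp_rw [← Finset.sum_mul, sum_norm_sq_column_of_mem_unitaryGroup hU, one_mul]

lemma sum_norm_sq_le_card_mul_of_longest_row {U V : Matrix n n 𝕜}
    (hU : U ∈ unitaryGroup n 𝕜) (hV : V ∈ unitaryGroup n 𝕜) (d : n → 𝕜) (α : n)
    (hα : ∀ j, ∑ k, ‖(U * diagonal d * Vᴴ) j k‖ ^ 2 ≤ ∑ k, ‖(U * diagonal d * Vᴴ) α k‖ ^ 2) :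
    ∑ i, ‖d i‖ ^ 2 ≤ Fintype.card n * ∑ i, ‖U α i‖ ^ 2 * ‖d i‖ ^ 2 := by
  rw [← sum_sum_norm_sq_mul_diagonal_mul_conjTranspose hU hV,
    ← sum_norm_sq_row_mul_diagonal_mul_conjTranspose U hV, ← nsmul_eq_mul]
  exact Finset.sum_le_card_nsmul _ _ _ fun j _ => hα j

lemma sum_norm_sq_le_card_mul_of_longest_column {U V : Matrix n n 𝕜}
    (hU : U ∈ unitaryGroup n 𝕜) (hV : V ∈ unitaryGroup n 𝕜) (d : n → 𝕜) (β : n)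
    (hβ : ∀ j, ∑ k, ‖(U * diagonal d * Vᴴ) k j‖ ^ 2 ≤ ∑ k, ‖(U * diagonal d * Vᴴ) k β‖ ^ 2) :
    ∑ i, ‖d i‖ ^ 2 ≤ Fintype.card n * ∑ i, ‖V β i‖ ^ 2 * ‖d i‖ ^ 2 := by
  have h := sum_norm_sq_le_card_mul_of_longest_row hV hU (star d) β
  simp only [← conjTranspose_mul_diagonal_mul_conjTranspose, conjTranspose_apply, norm_star,
    Pi.star_apply] at h
  exact h hβ

end SingularValueDecomposition

lemma norm_sub_norm_sub_norm_le_norm_sum_fin_three {E : Type*} [SeminormedAddCommGroup E]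
    (z : Fin 3 → E) : ‖z 2‖ - ‖z 0‖ - ‖z 1‖ ≤ ‖∑ i, z i‖ := by
  rw [Fin.sum_univ_three]
  have h : z 2 = z 0 + z 1 + z 2 - (z 0 + z 1) := by abel
  linarith [norm_sub_le (z 0 + z 1 + z 2) (z 0 + z 1), norm_add_le (z 0) (z 1),
    congrArg norm h]

lemma norm_sub_norm_sub_norm_le_norm_mul_diagonal_mul_conjTranspose_apply {𝕜 : Type*} [RCLike 𝕜]
    (U V : Matrix (Fin 3) (Fin 3) 𝕜) (d : Fin 3 → 𝕜) (α β : Fin 3) :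
    ‖U α 2‖ * ‖d 2‖ * ‖V β 2‖ - ‖U α 0‖ * ‖d 0‖ * ‖V β 0‖ - ‖U α 1‖ * ‖d 1‖ * ‖V β 1‖
      ≤ ‖(U * diagonal d * Vᴴ) α β‖ := by
  rw [mul_diagonal_mul_conjTranspose_apply]
  simpa only [norm_mul, norm_star] using
    norm_sub_norm_sub_norm_le_norm_sum_fin_three fun i => U α i * d i * star (V β i)

lemma add_le_div_mul_of_sum_sq_le_three_mul {w y : Fin 3 → ℝ} (hw₀ : 0 ≤ w 0)
    (hw : ∑ i, w i = 1) (hy₀ : 0 ≤ y 0) (hy₀₁ : y 0 ≤ y 1) (hgap : 2 * y 1 ^ 2 < y 2 ^ 2)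
    (h : ∑ i, y i ^ 2 ≤ 3 * ∑ i, w i * y i ^ 2) :
    w 0 + w 1 ≤ (2 * y 2 ^ 2 - y 1 ^ 2) / (y 2 ^ 2 - 2 * y 1 ^ 2) * w 2 := by
  rw [Fin.sum_univ_three] at hw
  simp only [Fin.sum_univ_three] at h
  rw [div_mul_eq_mul_div, le_div_iff₀ (by linarith)]
  nlinarith [mul_le_mul_of_nonneg_left (pow_le_pow_left₀ hy₀ hy₀₁ 2) hw₀, sq_nonneg (y 0)]

lemma add_mul_add_le_mul_mul_of_sq_add_sq_le {a₀ a₁ a₂ b₀ b₁ b₂ X : ℝ} (hX : 0 ≤ X)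
    (ha₂ : 0 ≤ a₂) (hb₂ : 0 ≤ b₂) (ha : a₀ ^ 2 + a₁ ^ 2 ≤ X * a₂ ^ 2)
    (hb : b₀ ^ 2 + b₁ ^ 2 ≤ X * b₂ ^ 2) : a₀ * b₀ + a₁ * b₁ ≤ X * (a₂ * b₂) := by
  refine le_of_sq_le_sq ?_ (by positivity)
  calc (a₀ * b₀ + a₁ * b₁) ^ 2 ≤ (a₀ ^ 2 + a₁ ^ 2) * (b₀ ^ 2 + b₁ ^ 2) := by
        nlinarith [sq_nonneg (a₀ * b₁ - a₁ * b₀)]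
    _ ≤ (X * a₂ ^ 2) * (X * b₂ ^ 2) := mul_le_mul ha hb (by positivity) (by positivity)
    _ = (X * (a₂ * b₂)) ^ 2 := by ring

theorem common_entry_lower_bound_general
    (Y U_L U_R : Matrix (Fin 3) (Fin 3) ℂ) (y : Fin 3 → ℝ) (α β : Fin 3)
    (hUL : U_L ∈ Matrix.unitaryGroup (Fin 3) ℂ)
    (hUR : U_R ∈ Matrix.unitaryGroup (Fin 3) ℂ)
    (hy0 : 0 ≤ y 0) (h01 : y 0 ≤ y 1)
    (hgap : 2 * (y 1)^2 < (y 2)^2)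
    (hSVD : Y = U_L * Matrix.diagonal (fun i => (y i : ℂ)) * U_Rᴴ)
    (hα : ∀ j, ∑ k, ‖Y j k‖^2 ≤ ∑ k, ‖Y α k‖^2)
    (hβ : ∀ j, ∑ k, ‖Y k j‖^2 ≤ ∑ k, ‖Y k β‖^2) :
    ‖U_L α 2‖ * ‖U_R β 2‖
        * (y 2 - (2 * (y 2)^2 - (y 1)^2) / ((y 2)^2 - 2 * (y 1)^2) * y 1)
      ≤ ‖Y α β‖ := by
  set X := (2 * y 2 ^ 2 - y 1 ^ 2) / (y 2 ^ 2 - 2 * y 1 ^ 2)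
  have hy1 : 0 ≤ y 1 := hy0.trans h01
  have hX : 0 ≤ X := div_nonneg (by nlinarith) (by linarith)
  have hnorm_sq (i : Fin 3) : ‖(y i : ℂ)‖ ^ 2 = y i ^ 2 := by
    rw [Complex.norm_real, Real.norm_eq_abs, sq_abs]
  subst hSVD
  have hrow := sum_norm_sq_le_card_mul_of_longest_row hUL hUR _ α hα
  have hcol := sum_norm_sq_le_card_mul_of_longest_column hUL hUR _ β hβ
  simp only [hnorm_sq, Fintype.card_fin, Nat.cast_ofNat] at hrow hcol
  have hwL := add_le_div_mul_of_sum_sq_le_three_mul (w := fun i => ‖U_L α i‖ ^ 2) (by positivity)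
    (sum_norm_sq_row_of_mem_unitaryGroup hUL α) hy0 h01 hgap hrow
  have hwR := add_le_div_mul_of_sum_sq_le_three_mul (w := fun i => ‖U_R β i‖ ^ 2) (by positivity)
    (sum_norm_sq_row_of_mem_unitaryGroup hUR β) hy0 h01 hgap hcol
  have hcross := add_mul_add_le_mul_mul_of_sq_add_sq_le hX (norm_nonneg _) (norm_nonneg _) hwL hwR
  have hentry :=
    norm_sub_norm_sub_norm_le_norm_mul_diagonal_mul_conjTranspose_apply U_L U_R
      (fun i => (y i : ℂ)) α β
  simp only [Complex.norm_real, Real.norm_eq_abs, abs_of_nonneg hy0, abs_of_nonneg hy1] at hentry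
  have hab₀ := mul_nonneg (norm_nonneg (U_L α 0)) (norm_nonneg (U_R β 0))
  have hab₂ := mul_nonneg (norm_nonneg (U_L α 2)) (norm_nonneg (U_R β 2))
  linarith [mul_le_mul_of_nonneg_left h01 hab₀, mul_le_mul_of_nonneg_left (le_abs_self (y 2)) hab₂,
    mul_le_mul_of_nonneg_left hcross hy1]

/-- Lower bound on the entry of Y common to its longest row and longest column:
`|Y_{αβ}| ≥ |U_{L,α3}||U_{R,β3}|(y₃ − X y₂)`. -/
theorem common_entry_lower_bound
    (Y U_L U_R : Matrix (Fin 3) (Fin 3) ℂ) (y : Fin 3 → ℝ) (α β : Fin 3)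
    (hUL : U_L ∈ Matrix.unitaryGroup (Fin 3) ℂ)
    (hUR : U_R ∈ Matrix.unitaryGroup (Fin 3) ℂ)
    (hy0 : 0 ≤ y 0) (h01 : y 0 ≤ y 1) (h12 : y 1 ≤ y 2)
    (hgap : 2 * (y 1)^2 < (y 2)^2)
    (hSVD : Y = U_L * Matrix.diagonal (fun i => (y i : ℂ)) * U_Rᴴ)
    (hα : ∀ j, ∑ k, ‖Y j k‖^2 ≤ ∑ k, ‖Y α k‖^2)
    (hβ : ∀ j, ∑ k, ‖Y k j‖^2 ≤ ∑ k, ‖Y k β‖^2)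
    (hX : (2 * (y 2)^2 - (y 1)^2) / ((y 2)^2 - 2 * (y 1)^2) * y 1 < y 2) :
    ‖U_L α 2‖ * ‖U_R β 2‖
        * (y 2 - (2 * (y 2)^2 - (y 1)^2) / ((y 2)^2 - 2 * (y 1)^2) * y 1)
      ≤ ‖Y α β‖ :=
  common_entry_lower_bound_general Y U_L U_R y α β hUL hUR hy0 h01 hgap hSVD hα hβ
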